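/- arXiv:1507.03726 — 2 statements merged into one kernel-verified Lean document; each statement's English description precedes it below -/
import Mathlib

section
/- A finitely generated group G is nilpotent if and only if G = C_n(G) for some positive integer n, where C_0(G) = 1 and C_{i+1}(G)/C_i(G) = C(G/C_i(G)) with C(K) = ⋂_{a∈K} N_K(C_K(a)). -/
/-!
The centre lies in `C(K)`, so the upper central series lies below the series `C_i(G)` and a
nilpotent group equals some `C_n(G)`.

Conversely, let `G` be generated by `d` elements and `x ∈ C(G)`. The conjugates of `x` commute
pairwise, so `A = ⟨x^G⟩` is an abelian normal subgroup inside `C(G)`, and `⁅⁅a, g⁆, g⁆ = 1` for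
all `a ∈ A`, `g ∈ G`. In the ring of additive endomorphisms of `A`, on which `1 - g` acts as
`a ↦ ⁅a, g⁆`, this says `(1 - g)² = 0`; applied to `g`, `h` and `gh` it forces `1 - g` and `1 - h`
to anticommute. Every `1 - g` is a noncommutative polynomial without constant term in the
`1 - s`, `s` a generator, so a product of `d + 1` factors `1 - g` expands into products of at
least `d + 1` generator factors, each of which repeats a generator and vanishes by
anticommutation. Hence `C(G) ≤ Z_{d+1}(G)`, and applying this to the finitely generated quotients
`G/C_i(G)` puts every `C_i(G)` inside some term of the upper central series.
-/

/-- The norm of centralizers: intersection of normalizers of centralizers of all elements. -/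
def normCent (G : Type*) [Group G] : Subgroup G :=
  ⨅ a : G, Subgroup.normalizer (Subgroup.centralizer {a} : Set G)

theorem normCent_normal (G : Type*) [Group G] : (normCent G).Normal := by
  constructor
  intro n hn g
  simp only [normCent, Subgroup.mem_iInf] at hn ⊢
  intro a
  rw [Subgroup.mem_normalizer_iff]
  intro h
  have h1 := Subgroup.mem_normalizer_iff.mp (hn (g⁻¹ * a * g)) (g⁻¹ * h * g)
  simp only [Subgroup.mem_centralizer_singleton_iff] at h1 ⊢
  constructor
  · intro hc
    have e0 : (g⁻¹ * h * g) * (g⁻¹ * a * g) = (g⁻¹ * a * g) * (g⁻¹ * h * g) := by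
      calc (g⁻¹ * h * g) * (g⁻¹ * a * g) = g⁻¹ * (h * a) * g := by group
        _ = g⁻¹ * (a * h) * g := by rw [hc]
        _ = (g⁻¹ * a * g) * (g⁻¹ * h * g) := by group
    have e1 := h1.mp e0
    calc g * n * g⁻¹ * h * (g * n * g⁻¹)⁻¹ * a
        = g * ((n * (g⁻¹ * h * g) * n⁻¹) * (g⁻¹*a*g)) * g⁻¹ := by group
      _ = g * ((g⁻¹*a*g) * (n * (g⁻¹ * h * g) * n⁻¹)) * g⁻¹ := by rw [e1]
      _ = a * (g * n * g⁻¹ * h * (g * n * g⁻¹)⁻¹) := by group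
  · intro hc
    have e0 : (n * (g⁻¹ * h * g) * n⁻¹) * (g⁻¹*a*g) = (g⁻¹*a*g) * (n * (g⁻¹ * h * g) * n⁻¹) := by
      calc (n * (g⁻¹ * h * g) * n⁻¹) * (g⁻¹*a*g)
          = g⁻¹ * ((g * n * g⁻¹ * h * (g * n * g⁻¹)⁻¹) * a) * g := by group
        _ = g⁻¹ * (a * (g * n * g⁻¹ * h * (g * n * g⁻¹)⁻¹)) * g := by rw [hc]
        _ = (g⁻¹*a*g) * (n * (g⁻¹ * h * g) * n⁻¹) := by group
    have e1 := h1.mpr e0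
    calc h * a = g * ((g⁻¹*h*g) * (g⁻¹*a*g)) * g⁻¹ := by group
      _ = g * ((g⁻¹*a*g) * (g⁻¹*h*g)) * g⁻¹ := by rw [e1]
      _ = a * h := by group
/-- The ascending series of norms of centralizers, bundled with normality. -/
def CSeriesAux (G : Type*) [Group G] : ℕ → {H : Subgroup G // H.Normal}
  | 0 => ⟨⊥, inferInstance⟩
  | (i+1) =>
    let p := CSeriesAux G i
    haveI := p.2
    ⟨(normCent (G ⧸ p.1)).comap (QuotientGroup.mk' p.1),
      Subgroup.Normal.comap (normCent_normal _) _⟩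

/-- `CSeries G i` = `C_i(G)`: `C_0 = 1` and `C_{i+1}(G)/C_i(G) = C(G/C_i(G))`. -/
def CSeries (G : Type*) [Group G] (n : ℕ) : Subgroup G := (CSeriesAux G n).1

instance CSeries_normal (G : Type*) [Group G] (n : ℕ) : (CSeries G n).Normal :=
  (CSeriesAux G n).2

section SquareZero

variable {R : Type*} [Ring R]

theorem mul_eq_neg_mul_of_mul_self_eq_zero {p q : R} (hp : p * p = 0) (hq : q * q = 0)
    (hpq : (p + q - p * q) * (p + q - p * q) = 0)
    (hqp : (q + p - q * p) * (q + p - q * p) = 0) :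
    p * q = -(q * p) := by
  have hp' (r : R) : p * (p * r) = 0 := by rw [← mul_assoc, hp, zero_mul]
  have hq' (r : R) : q * (q * r) = 0 := by rw [← mul_assoc, hq, zero_mul]
  simp only [mul_add, add_mul, mul_sub, sub_mul, mul_assoc, hp, hq, hp', hq', mul_zero,
    zero_add, add_zero, sub_zero] at hpq hqp
  have h1 := congrArg (p * ·) hpq
  have h2 := congrArg (· * p) hpq
  have h3 := congrArg (q * ·) hqp
  simp only [mul_add, add_mul, mul_sub, sub_mul, mul_assoc, hp, hp', hq', mul_zero,
    zero_add, add_zero, sub_zero] at h1 h2 h3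
  -- `pqp = pqpq`, `pqp = qpqp = qpq`, hence `pqp = (pqp)q = (qpq)q = 0`
  have hpqp_eq : p * (q * p) = p * (q * (p * q)) := sub_eq_zero.mp h1
  have hpqpqp : p * (q * (p * (q * p))) = 0 :=
    calc _ = p * (q * (p * q)) * p := by simp only [mul_assoc]
      _ = 0 := by rw [← hpqp_eq]; simp only [mul_assoc, hp, mul_zero]
  have hpqp_eq' : p * (q * p) = q * (p * (q * p)) := by
    rw [hpqpqp, sub_zero, zero_mul] at h2; exact sub_eq_zero.mp h2
  have hqpq_eq : q * (p * q) = q * (p * (q * p)) := sub_eq_zero.mp h3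
  have hpqp : p * (q * p) = 0 :=
    calc p * (q * p) = p * (q * (p * q)) := hpqp_eq
      _ = p * (q * p) * q := by simp only [mul_assoc]
      _ = q * (p * q) * q := by rw [hpqp_eq', hqpq_eq]
      _ = 0 := by simp only [mul_assoc, hq, mul_zero]
  have hqpq : q * (p * q) = 0 := by rw [hqpq_eq, ← hpqp_eq', hpqp]
  rw [hpqp, hqpq, mul_zero, sub_zero, sub_zero, sub_zero, add_comm] at hpq
  exact eq_neg_of_add_eq_zero_left hpq

variable {G : Type*} [Group G] {ρ : G →* R}

theorem one_sub_map_mul (g h : G) :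
    1 - ρ (g * h) = (1 - ρ g) + (1 - ρ h) - (1 - ρ g) * (1 - ρ h) := by
  rw [map_mul]; noncomm_ring

theorem one_sub_map_inv (hρ : ∀ g, (1 - ρ g) * (1 - ρ g) = 0) (g : G) :
    1 - ρ g⁻¹ = -(1 - ρ g) := by
  have hinv : ρ g * (1 + (1 - ρ g)) = 1 := by
    calc ρ g * (1 + (1 - ρ g)) = 1 - (1 - ρ g) * (1 - ρ g) := by noncomm_ring
      _ = 1 := by rw [hρ, sub_zero]
  have : ρ g⁻¹ = 1 + (1 - ρ g) := by
    calc ρ g⁻¹ = ρ g⁻¹ * (ρ g * (1 + (1 - ρ g))) := by rw [hinv, mul_one]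
      _ = 1 + (1 - ρ g) := by rw [← mul_assoc, ← map_mul, inv_mul_cancel, map_one, one_mul]
  rw [this]; abel

theorem one_sub_map_mul_comm (hρ : ∀ g, (1 - ρ g) * (1 - ρ g) = 0) (g h : G) :
    (1 - ρ g) * (1 - ρ h) = -((1 - ρ h) * (1 - ρ g)) :=
  mul_eq_neg_mul_of_mul_self_eq_zero (hρ g) (hρ h)
    (by rw [← one_sub_map_mul]; exact hρ _) (by rw [← one_sub_map_mul]; exact hρ _)

theorem one_sub_map_mul_prod_mul_one_sub_map (hρ : ∀ g, (1 - ρ g) * (1 - ρ g) = 0) (g : G) :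
    ∀ l : List G, (1 - ρ g) * (l.map fun h ↦ 1 - ρ h).prod * (1 - ρ g) = 0
  | [] => by simpa using hρ g
  | h :: l => by
    calc (1 - ρ g) * ((h :: l).map fun h ↦ 1 - ρ h).prod * (1 - ρ g)
        = -((1 - ρ h) * ((1 - ρ g) * (l.map fun h ↦ 1 - ρ h).prod * (1 - ρ g))) := by
          rw [List.map_cons, List.prod_cons, ← mul_assoc, one_sub_map_mul_comm hρ]
          noncomm_ring
      _ = 0 := by rw [one_sub_map_mul_prod_mul_one_sub_map hρ g l, mul_zero, neg_zero]

theorem prod_map_one_sub_eq_zero_of_not_nodup (hρ : ∀ g, (1 - ρ g) * (1 - ρ g) = 0) :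
    ∀ {l : List G}, ¬ l.Nodup → (l.map fun h ↦ 1 - ρ h).prod = 0
  | [], hl => absurd List.nodup_nil hl
  | g :: l, hl => by
    rw [List.map_cons, List.prod_cons]
    by_cases hg : g ∈ l
    · obtain ⟨s, t, rfl⟩ := List.append_of_mem hg
      rw [List.map_append, List.prod_append, List.map_cons, List.prod_cons, ← mul_assoc,
        ← mul_assoc, one_sub_map_mul_prod_mul_one_sub_map hρ, zero_mul]
    · rw [prod_map_one_sub_eq_zero_of_not_nodup hρ fun h ↦ hl (List.nodup_cons.mpr ⟨hg, h⟩),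
        mul_zero]

def augFiltration (ρ : G →* R) (S : Set G) (k : ℕ) : Submodule ℤ R :=
  Submodule.span ℤ
    {r | ∃ l : List G, k ≤ l.length ∧ (∀ s ∈ l, s ∈ S) ∧ (l.map fun g ↦ 1 - ρ g).prod = r}

theorem augFiltration_antitone (S : Set G) : Antitone (augFiltration ρ S) :=
  fun _ _ hkk' ↦ Submodule.span_mono fun _ ⟨l, hl, hlS, hr⟩ ↦ ⟨l, hkk'.trans hl, hlS, hr⟩

theorem mul_mem_augFiltration {S : Set G} {i j : ℕ} {x y : R} (hx : x ∈ augFiltration ρ S i)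
    (hy : y ∈ augFiltration ρ S j) : x * y ∈ augFiltration ρ S (i + j) := by
  have hxy := Submodule.mul_mem_mul hx hy
  rw [augFiltration, augFiltration, Submodule.span_mul_span] at hxy
  refine Submodule.span_mono ?_ hxy
  rintro _ ⟨_, ⟨l₁, hl₁, hl₁S, rfl⟩, _, ⟨l₂, hl₂, hl₂S, rfl⟩, rfl⟩
  refine ⟨l₁ ++ l₂, by simp only [List.length_append]; omega, ?_, by simp⟩
  simp only [List.mem_append]
  rintro s (hs | hs)
  exacts [hl₁S s hs, hl₂S s hs]

theorem one_sub_mem_augFiltration_one (hρ : ∀ g, (1 - ρ g) * (1 - ρ g) = 0) {S : Set G}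
    (hS : Subgroup.closure S = ⊤) (g : G) : 1 - ρ g ∈ augFiltration ρ S 1 := by
  have hg : g ∈ Subgroup.closure S := hS ▸ Subgroup.mem_top g
  induction hg using Subgroup.closure_induction with
  | mem s hs => exact Submodule.subset_span ⟨[s], le_rfl, by simpa using hs, by simp⟩
  | one => simp
  | mul g h _ _ hg hh =>
    rw [one_sub_map_mul]
    exact sub_mem (add_mem hg hh)
      (augFiltration_antitone S (by omega) (mul_mem_augFiltration hg hh))
  | inv g _ hg => rw [one_sub_map_inv hρ]; exact neg_mem hg

theorem prod_mem_augFiltration (hρ : ∀ g, (1 - ρ g) * (1 - ρ g) = 0) {S : Set G}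
    (hS : Subgroup.closure S = ⊤) :
    ∀ l : List G, (l.map fun g ↦ 1 - ρ g).prod ∈ augFiltration ρ S l.length
  | [] => Submodule.subset_span ⟨[], le_rfl, by simp, rfl⟩
  | g :: l => by
    rw [List.map_cons, List.prod_cons, List.length_cons, add_comm]
    exact mul_mem_augFiltration (one_sub_mem_augFiltration_one hρ hS g)
      (prod_mem_augFiltration hρ hS l)

theorem augFiltration_card_add_one_eq_bot (hρ : ∀ g, (1 - ρ g) * (1 - ρ g) = 0) (S : Finset G) :
    augFiltration ρ S (S.card + 1) = ⊥ := by
  classical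
  refine Submodule.span_eq_bot.mpr ?_
  rintro _ ⟨l, hl, hlS, rfl⟩
  refine prod_map_one_sub_eq_zero_of_not_nodup hρ fun hnd ↦ ?_
  have := Finset.card_le_card (s := l.toFinset) (t := S)
    fun s hs ↦ hlS s (List.mem_toFinset.mp hs)
  rw [List.toFinset_card_of_nodup hnd] at this
  omega

theorem prod_map_one_sub_eq_zero (hρ : ∀ g, (1 - ρ g) * (1 - ρ g) = 0) {S : Finset G}
    (hS : Subgroup.closure (S : Set G) = ⊤) {l : List G} (hl : S.card < l.length) :
    (l.map fun g ↦ 1 - ρ g).prod = 0 := by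
  have := augFiltration_antitone (ρ := ρ) (S : Set G) hl (prod_mem_augFiltration hρ hS l)
  rwa [augFiltration_card_add_one_eq_bot hρ, Submodule.mem_bot] at this

end SquareZero

section ConjRep

open scoped IsMulCommutative commutatorElement

variable {G : Type*} [Group G] (A : Subgroup G) [A.Normal] [IsMulCommutative A]

def conjRep : Representation ℤ G (Additive A) :=
  (Representation.ofMulDistribMulAction (ConjAct G) A).comp ConjAct.toConjAct.toMonoidHom

theorem coe_toMul_one_sub_conjRep (g : G) (a : Additive A) :
    (((1 - conjRep A g) a).toMul : G) = ⁅(a.toMul : G), g⁆ := by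
  simp only [conjRep, MulEquiv.toMonoidHom_eq_coe, MonoidHom.coe_comp, MonoidHom.coe_coe,
    Function.comp_apply, LinearMap.sub_apply, Module.End.one_apply,
    Representation.ofMulDistribMulAction_apply_apply, toMul_ofMul, toMul_sub,
    SubgroupClass.coe_div, commutatorElement_def]
  rw [div_eq_mul_inv, ConjAct.Subgroup.val_conj_smul, ConjAct.toConjAct_smul]
  group

theorem mem_upperCentralSeries_of_prod_conjRep_eq_zero (k : ℕ) (a : A)
    (h : ∀ l : List G, l.length = k → (l.map fun g ↦ 1 - conjRep A g).prod (.ofMul a) = 0) :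
    (a : G) ∈ Subgroup.upperCentralSeries G k := by
  induction k generalizing a with
  | zero =>
    simpa using h [] rfl
  | succ k ih =>
    refine Subgroup.mem_upperCentralSeries_succ_iff.mpr fun g ↦ ?_
    have := ih ((1 - conjRep A g) (.ofMul a)).toMul fun l hl ↦ by
      simpa [List.prod_append, Module.End.mul_apply] using h (l ++ [g]) (by simp [hl])
    rwa [coe_toMul_one_sub_conjRep] at this

theorem le_upperCentralSeries_of_commute_commutator {S : Finset G}
    (hS : Subgroup.closure (S : Set G) = ⊤) (hA : ∀ a ∈ A, ∀ g : G, Commute ⁅a, g⁆ g) :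
    A ≤ Subgroup.upperCentralSeries G (S.card + 1) := by
  have hsq (g : G) : (1 - conjRep A g) * (1 - conjRep A g) = 0 := by
    refine LinearMap.ext fun a ↦ Additive.toMul.injective (Subtype.ext ?_)
    rw [Module.End.mul_apply, coe_toMul_one_sub_conjRep, coe_toMul_one_sub_conjRep,
      commutatorElement_eq_one_iff_commute.mpr (hA _ (Subtype.prop _) g)]
    rfl
  intro a ha
  refine mem_upperCentralSeries_of_prod_conjRep_eq_zero A _ ⟨a, ha⟩ fun l hl ↦ ?_
  rw [prod_map_one_sub_eq_zero hsq hS (by omega), LinearMap.zero_apply]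

end ConjRep

section NormCent

open scoped commutatorElement

variable {G : Type*} [Group G] {x : G}

theorem conj_commute_of_mem_normCent (hx : x ∈ normCent G) {g u : G} (hu : Commute u g) :
    Commute (x * u * x⁻¹) g :=
  Subgroup.mem_centralizer_singleton_iff.mp <|
    ((Subgroup.mem_normalizer_iff.mp (Subgroup.mem_iInf.mp hx g)) u).mp
      (Subgroup.mem_centralizer_singleton_iff.mpr hu)

theorem commute_commutator_of_mem_normCent (hx : x ∈ normCent G) (g : G) :
    Commute ⁅x, g⁆ g := by
  rw [commutatorElement_def]
  exact (conj_commute_of_mem_normCent hx (Commute.refl g)).mul_left (Commute.refl g).inv_left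

theorem commute_conj_of_mem_normCent (hx : x ∈ normCent G) (g : G) :
    Commute x (g * x * g⁻¹) := by
  have hc := commute_commutator_of_mem_normCent hx g
  -- `x ⁅x, g⁆ x⁻¹ = ⁅x, x g⁆` commutes with both `g` and `x g`, hence with `x`
  have h₁ : Commute (x * ⁅x, g⁆ * x⁻¹) g := conj_commute_of_mem_normCent hx hc
  have h₂ : Commute (x * ⁅x, g⁆ * x⁻¹) (x * g) := by
    have := commute_commutator_of_mem_normCent hx (x * g)
    rwa [show ⁅x, x * g⁆ = x * ⁅x, g⁆ * x⁻¹ by simp only [commutatorElement_def]; group] at this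
  have h₃ : Commute ⁅x, g⁆ x := by
    rw [← Commute.conj_iff x, show x * x * x⁻¹ = x by group]
    simpa using h₂.mul_right h₁.inv_right
  have h₄ : g * x * g⁻¹ = (x⁻¹ * ⁅x, g⁆)⁻¹ := by rw [commutatorElement_def]; group
  rw [h₄]
  exact ((Commute.refl x).inv_right.mul_right h₃.symm).inv_right

theorem isMulCommutative_normalClosure_of_mem_normCent (hx : x ∈ normCent G) :
    IsMulCommutative (Subgroup.normalClosure {x}) := by
  refine Subgroup.isMulCommutative_closure fun u hu v hv ↦ ?_
  obtain ⟨a, rfl⟩ := isConj_iff.mp (by simpa using Group.mem_conjugatesOfSet_iff.mp hu)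
  obtain ⟨b, rfl⟩ := isConj_iff.mp (by simpa using Group.mem_conjugatesOfSet_iff.mp hv)
  have := (Commute.conj_iff a).mpr (commute_conj_of_mem_normCent hx (a⁻¹ * b))
  rw [show a * (a⁻¹ * b * x * (a⁻¹ * b)⁻¹) * a⁻¹ = b * x * b⁻¹ by group] at this
  exact this.eq

theorem normCent_le_upperCentralSeries {S : Finset G} (hS : Subgroup.closure (S : Set G) = ⊤) :
    normCent G ≤ Subgroup.upperCentralSeries G (S.card + 1) := by
  intro x hx
  have := isMulCommutative_normalClosure_of_mem_normCent hx
  have : Subgroup.normalClosure {x} ≤ normCent G :=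
    haveI := normCent_normal G
    Subgroup.normalClosure_le_normal (Set.singleton_subset_iff.mpr hx)
  exact le_upperCentralSeries_of_commute_commutator _ hS
    (fun a ha ↦ commute_commutator_of_mem_normCent (this ha))
    (Subgroup.subset_normalClosure (Set.mem_singleton x))

end NormCent

section CSeries

open scoped commutatorElement

variable {G : Type*} [Group G]

theorem CSeries_succ (i : ℕ) :
    CSeries G (i + 1) = (normCent (G ⧸ CSeries G i)).comap (QuotientGroup.mk' (CSeries G i)) :=
  rfl

theorem center_le_normCent : Subgroup.center G ≤ normCent G :=
  le_iInf fun _ ↦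
    (Subgroup.center_le_centralizer _).trans (Subgroup.centralizer_le_normalizer _)

theorem upperCentralSeries_le_CSeries (i : ℕ) :
    Subgroup.upperCentralSeries G i ≤ CSeries G i := by
  induction i with
  | zero => exact bot_le
  | succ i ih =>
    intro x hx
    rw [CSeries_succ, Subgroup.mem_comap]
    refine center_le_normCent (Subgroup.mem_center_iff.mpr fun q ↦ ?_)
    induction q using QuotientGroup.induction_on with | H y => ?_
    rw [eq_comm, ← commutatorElement_eq_one_iff_mul_comm, ← QuotientGroup.mk'_apply,
      ← map_commutatorElement, QuotientGroup.mk'_apply, QuotientGroup.eq_one_iff]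
    exact ih (Subgroup.mem_upperCentralSeries_succ_iff.mp hx y)

theorem comap_upperCentralSeries_quotient_le {N : Subgroup G} [N.Normal] {m : ℕ}
    (hN : N ≤ Subgroup.upperCentralSeries G m) (j : ℕ) :
    (Subgroup.upperCentralSeries (G ⧸ N) j).comap (QuotientGroup.mk' N) ≤
      Subgroup.upperCentralSeries G (m + j) := by
  induction j with
  | zero => simpa using hN
  | succ j ih =>
    refine fun x hx ↦ Subgroup.mem_upperCentralSeries_succ_iff.mpr fun y ↦ ih ?_
    rw [Subgroup.mem_comap, map_commutatorElement]
    exact Subgroup.mem_upperCentralSeries_succ_iff.mp hx _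

theorem exists_CSeries_le_upperCentralSeries [Group.FG G] (i : ℕ) :
    ∃ m, CSeries G i ≤ Subgroup.upperCentralSeries G m := by
  induction i with
  | zero => exact ⟨0, bot_le⟩
  | succ i ih =>
    obtain ⟨m, hm⟩ := ih
    obtain ⟨-, S, -, hS⟩ := Group.fg_iff'.mp (QuotientGroup.fg (CSeries G i))
    exact ⟨m + (S.card + 1), (Subgroup.comap_mono (normCent_le_upperCentralSeries hS)).trans
      (comap_upperCentralSeries_quotient_le hm _)⟩

end CSeries

/-- A finitely generated group is nilpotent iff `G = C_n(G)` for some positive `n`. -/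
theorem stmt12 (G : Type*) [Group G] (hFG : Group.FG G) :
    Group.IsNilpotent G ↔ ∃ n : ℕ, 0 < n ∧ CSeries G n = ⊤ := by
  constructor
  · rintro ⟨n, hn⟩
    refine ⟨n + 1, n.succ_pos, top_unique ?_⟩
    calc ⊤ = Subgroup.upperCentralSeries G n := hn.symm
      _ ≤ Subgroup.upperCentralSeries G (n + 1) := Subgroup.upperCentralSeries_mono G n.le_succ
      _ ≤ CSeries G (n + 1) := upperCentralSeries_le_CSeries (n + 1)
  · rintro ⟨n, -, hn⟩
    have := hFG
    obtain ⟨m, hm⟩ := exists_CSeries_le_upperCentralSeries (G := G) n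
    exact ⟨m, top_unique (hn ▸ hm)⟩
end

section
/- If G is a group with G = C_n(G) for some positive integer n (a C̄_n-group), then G is solvable of derived length at most 2n. -/
/-!
An element `a` of `C(K)` normalizes `C_K(b)`, which contains `b`, so `a b a⁻¹` commutes with `b`:
`C(K)` satisfies the 2-Engel law `[[a, b], b] = 1`. By Levi's theorem a 2-Engel group is
metabelian, so every step of the series `C_i` costs at most two steps of the derived series.

Levi's theorem: in a 2-Engel group every element commutes with its conjugates, so the normal
closure `A` of `x` is abelian and conjugation turns it into a module on which every `d_g = g - 1`
squares to zero. Expanding `d_{gh}² = 0` gives `d_g d_h = -d_h d_g` and `d_g d_h d_g = 0`, hence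
`d_{[g,h]} = 2 d_g d_h` and `2 d_g d_h d_k = 0`. Applied to `x ∈ A`, this says that `[z, w]`
commutes with `[y, x]`.
-/

open scoped commutatorElement IsMulCommutative

theorem mul_mul_eq_zero_and_mul_eq_neg_mul_of_mul_self_eq_zero {R : Type*} [Ring R] {a b : R}
    (ha : a * a = 0) (hb : b * b = 0) (hab : (a + b + a * b) * (a + b + a * b) = 0) :
    a * b * a = 0 ∧ a * b = -(b * a) := by
  have hE : a * b + b * a + a * b * a + b * a * b + a * b * a * b = 0 := by
    linear_combination (norm := noncomm_ring) hab - ha - ha * b - hb - a * hb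
  have habab : a * b * a * b = 0 := by
    linear_combination (norm := noncomm_ring)
      a * hE * b - ha * b * b - ha * b * a * b - ha * b * a * b * b - a * b * a * hb
  have haba : a * b * a = 0 := by
    linear_combination (norm := noncomm_ring)
      a * hE - ha * b - ha * b * a - habab - ha * b * a * b
  have hbab : b * a * b = 0 := by
    linear_combination (norm := noncomm_ring)
      hE * b - a * hb - habab - b * a * hb - a * b * a * hb
  exact ⟨haba, by linear_combination (norm := noncomm_ring) hE - haba - hbab - habab⟩

namespace MonoidHom

variable {G R : Type*} [Group G] [Ring R] (ρ : G →* R)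

theorem map_mul_sub_one (g h : G) :
    ρ (g * h) - 1 = (ρ g - 1) + (ρ h - 1) + (ρ g - 1) * (ρ h - 1) := by
  rw [map_mul]; noncomm_ring

variable {ρ} (hρ : ∀ g, (ρ g - 1) * (ρ g - 1) = 0)
include hρ

theorem sub_one_mul_sub_one_mul_sub_one_self_and_anticomm (g h : G) :
    (ρ g - 1) * (ρ h - 1) * (ρ g - 1) = 0 ∧
      (ρ g - 1) * (ρ h - 1) = -((ρ h - 1) * (ρ g - 1)) :=
  mul_mul_eq_zero_and_mul_eq_neg_mul_of_mul_self_eq_zero (hρ g) (hρ h)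
    (map_mul_sub_one ρ g h ▸ hρ (g * h))

theorem map_inv_sub_one (g : G) : ρ g⁻¹ - 1 = -(ρ g - 1) := by
  have h := map_mul_sub_one ρ g g⁻¹
  rw [mul_inv_cancel, map_one, sub_self] at h
  linear_combination (norm := noncomm_ring)
    -h + (ρ g - 1) * h + hρ g + hρ g * (ρ g⁻¹ - 1)

theorem map_commutatorElement_sub_one (g h : G) :
    ρ ⁅g, h⁆ - 1 = 2 * ((ρ g - 1) * (ρ h - 1)) := by
  obtain ⟨haba, hab⟩ := sub_one_mul_sub_one_mul_sub_one_self_and_anticomm hρ g h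
  obtain ⟨hbab, -⟩ := sub_one_mul_sub_one_mul_sub_one_self_and_anticomm hρ h g
  have ig := map_inv_sub_one hρ g
  have ih := map_inv_sub_one hρ h
  rw [commutatorElement_def, map_mul, map_mul, map_mul]
  -- with `d_g = ρ g - 1`: `ρ g⁻¹ = 1 - d_g`, and `(1 + d_g)(1 + d_h)(1 - d_g)(1 - d_h)`
  -- reduces to `1 + 2 d_g d_h` by the relations above
  linear_combination (norm := noncomm_ring)
    ρ g * ρ h * ig * ρ h⁻¹ + ρ g * ρ h * (1 - (ρ g - 1)) * ih - hab - hρ g - hρ h +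
      hρ g * (ρ h - 1) + hbab - haba - (ρ g - 1) * hρ h + haba * (ρ h - 1)

theorem two_mul_sub_one_mul_sub_one_mul_sub_one (g h k : G) :
    2 * ((ρ g - 1) * (ρ h - 1) * (ρ k - 1)) = 0 := by
  have E1 := (sub_one_mul_sub_one_mul_sub_one_self_and_anticomm hρ g (h * k)).2
  have E2 := (sub_one_mul_sub_one_mul_sub_one_self_and_anticomm hρ g h).2
  have E3 := (sub_one_mul_sub_one_mul_sub_one_self_and_anticomm hρ g k).2
  rw [map_mul_sub_one] at E1
  -- moving `d_g` past `d_h d_k` at once (`E1`) or one factor at a time gives opposite signs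
  linear_combination (norm := noncomm_ring) E1 - E2 - E3 + E2 * (ρ k - 1) - (ρ h - 1) * E3

theorem map_commutatorElement_sub_one_mul_sub_one (g h k : G) :
    (ρ ⁅g, h⁆ - 1) * (ρ k - 1) = 0 := by
  rw [map_commutatorElement_sub_one hρ, mul_assoc, two_mul_sub_one_mul_sub_one_mul_sub_one hρ]

end MonoidHom

def IsTwoEngel (G : Type*) [Group G] : Prop := ∀ a b : G, ⁅⁅a, b⁆, b⁆ = 1

section ConjEnd

variable {G : Type*} [Group G] (A : Subgroup G) [A.Normal] [IsMulCommutative A]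

def Subgroup.conjEnd : G →* AddMonoid.End (Additive A) :=
  MulEquiv.Monoid.End.toMonoidHom.comp
    ((MulDistribMulAction.toMonoidEnd (MulAut A) A).comp MulAut.conjNormal)

theorem Subgroup.conjEnd_apply (g : G) (u : Additive A) :
    ((A.conjEnd g u).toMul : G) = g * u.toMul * g⁻¹ :=
  MulAut.conjNormal_apply g u.toMul

theorem Subgroup.conjEnd_sub_one_apply (g : G) (u : Additive A) :
    (((A.conjEnd g - 1) u).toMul : G) = ⁅g, (u.toMul : G)⁆ := by
  change ((A.conjEnd g u - u).toMul : G) = _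
  simp only [toMul_sub, div_eq_mul_inv, Subgroup.coe_mul, conjEnd_apply, InvMemClass.coe_inv,
    commutatorElement_def]

end ConjEnd

namespace IsTwoEngel

variable {G : Type*} [Group G] (hG : IsTwoEngel G)
include hG

theorem commute_commutatorElement_left (g u : G) : Commute g ⁅g, u⁆ := by
  rw [← commutatorElement_inv]
  exact (commutatorElement_eq_one_iff_commute.mp (hG u g)).symm.inv_right

theorem commute_conj (x k : G) : Commute x (k * x * k⁻¹) := by
  have h : k * x * k⁻¹ = ⁅k, x⁆ * x := by rw [commutatorElement_def]; group
  rw [h]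
  exact ((commutatorElement_eq_one_iff_commute.mp (hG k x)).symm).mul_right (Commute.refl x)

theorem isMulCommutative_normalClosure (x : G) :
    IsMulCommutative (Subgroup.normalClosure {x}) := by
  refine Subgroup.isMulCommutative_closure fun a ha b hb => ?_
  simp only [Group.mem_conjugatesOfSet_iff, Set.mem_singleton_iff, exists_eq_left,
    isConj_iff] at ha hb
  obtain ⟨g, rfl⟩ := ha
  obtain ⟨k, rfl⟩ := hb
  have h := (Commute.conj_iff g).mpr (hG.commute_conj x (g⁻¹ * k))
  rw [show g * ((g⁻¹ * k) * x * (g⁻¹ * k)⁻¹) * g⁻¹ = k * x * k⁻¹ by group] at h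
  exact h.eq

theorem conjEnd_sub_one_mul_self (A : Subgroup G) [A.Normal] [IsMulCommutative A] (g : G) :
    (A.conjEnd g - 1) * (A.conjEnd g - 1) = 0 := by
  ext u
  change (((A.conjEnd g - 1) ((A.conjEnd g - 1) u)).toMul : G) = 1
  rw [Subgroup.conjEnd_sub_one_apply, Subgroup.conjEnd_sub_one_apply,
    commutatorElement_eq_one_iff_commute]
  exact hG.commute_commutatorElement_left g u.toMul

theorem commute_commutatorElement (x y z w : G) : Commute ⁅x, y⁆ ⁅z, w⁆ := by
  have := hG.isMulCommutative_normalClosure x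
  set A := Subgroup.normalClosure {x}
  have hx : x ∈ A := Subgroup.subset_normalClosure rfl
  have h : (((A.conjEnd ⁅z, w⁆ - 1) ((A.conjEnd y - 1) (.ofMul ⟨x, hx⟩))).toMul : G) = 1 :=
    congrArg (fun f : AddMonoid.End (Additive A) => ((f (.ofMul ⟨x, hx⟩)).toMul : G))
      (A.conjEnd.map_commutatorElement_sub_one_mul_sub_one (hG.conjEnd_sub_one_mul_self A) z w y)
  rw [Subgroup.conjEnd_sub_one_apply, Subgroup.conjEnd_sub_one_apply,
    commutatorElement_eq_one_iff_commute] at h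
  rw [← commutatorElement_inv]
  exact h.symm.inv_left

theorem derivedSeries_two_eq_bot : derivedSeries G 2 = ⊥ := by
  rw [derivedSeries_succ, derivedSeries_succ, derivedSeries_zero,
    Subgroup.commutator_eq_bot_iff_le_centralizer, Subgroup.commutator_le]
  intro x _ y _
  have h : ⁅(⊤ : Subgroup G), ⊤⁆ ≤ Subgroup.centralizer {⁅x, y⁆} := by
    rw [Subgroup.commutator_le]
    intro z _ w _
    exact Subgroup.mem_centralizer_singleton_iff.mpr (hG.commute_commutatorElement z w x y).eq
  exact Subgroup.mem_centralizer_iff.mpr fun c hc =>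
    Subgroup.mem_centralizer_singleton_iff.mp (h hc)

end IsTwoEngel

theorem Subgroup.commutator_commutator_eq_bot_of_isTwoEngel {G : Type*} [Group G]
    {K : Subgroup G} (hK : IsTwoEngel K) : ⁅⁅K, K⁆, ⁅K, K⁆⁆ = ⊥ := by
  simpa only [derivedSeries_succ, derivedSeries_zero, map_commutator, ← MonoidHom.range_eq_map,
    range_subtype, map_bot] using congrArg (map K.subtype) (IsTwoEngel.derivedSeries_two_eq_bot hK)

theorem commute_conj_of_mem_normCent_s15 {Q : Type*} [Group Q] {a : Q} (ha : a ∈ normCent Q)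
    (b : Q) : Commute (a * b * a⁻¹) b := by
  have hb : b ∈ Subgroup.centralizer {b} := Subgroup.mem_centralizer_singleton_iff.mpr rfl
  have h := (Subgroup.mem_normalizer_iff.mp (Subgroup.mem_iInf.mp ha b) b).mp hb
  exact Subgroup.mem_centralizer_singleton_iff.mp h

theorem isTwoEngel_normCent (Q : Type*) [Group Q] : IsTwoEngel (normCent Q) := by
  intro a b
  apply Subtype.ext
  change (normCent Q).subtype ⁅⁅a, b⁆, b⁆ = 1
  rw [map_commutatorElement, map_commutatorElement, commutatorElement_eq_one_iff_commute,
    commutatorElement_def]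
  exact (commute_conj_of_mem_normCent_s15 a.2 b).mul_left (Commute.refl _).inv_left

theorem commutator_commutator_le_of_le_comap_normCent {G : Type*} [Group G] {N K : Subgroup G}
    [N.Normal] (hK : K ≤ (normCent (G ⧸ N)).comap (QuotientGroup.mk' N)) :
    ⁅⁅K, K⁆, ⁅K, K⁆⁆ ≤ N := by
  have hK' := Subgroup.map_le_iff_le_comap.mpr hK
  rw [← QuotientGroup.ker_mk' N, ← MonoidHom.comap_bot, ← Subgroup.map_le_iff_le_comap,
    Subgroup.map_commutator, Subgroup.map_commutator,
    ← (Subgroup.commutator_commutator_eq_bot_of_isTwoEngel (isTwoEngel_normCent (G ⧸ N)))]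
  exact Subgroup.commutator_mono (Subgroup.commutator_mono hK' hK')
    (Subgroup.commutator_mono hK' hK')

theorem derivedSeries_eq_bot_of_le_CSeries (G : Type*) [Group G] (k m : ℕ)
    (h : derivedSeries G m ≤ CSeries G k) : derivedSeries G (m + 2 * k) = ⊥ := by
  induction k generalizing m with
  | zero => exact le_bot_iff.mp h
  | succ k ih =>
    rw [show m + 2 * (k + 1) = m + 2 + 2 * k by ring]
    refine ih (m + 2) ?_
    rw [derivedSeries_succ, derivedSeries_succ]
    exact commutator_commutator_le_of_le_comap_normCent h

theorem stmt15_general (G : Type*) [Group G] (n : ℕ) (h : CSeries G n = ⊤) :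
    derivedSeries G (2 * n) = ⊥ := by
  simpa using derivedSeries_eq_bot_of_le_CSeries G n 0 (h ▸ le_top)

/-- A `C̄_n`-group is solvable of derived length at most `2n`. -/
theorem stmt15 (G : Type*) [Group G] (n : ℕ) (hn : 0 < n) (h : CSeries G n = ⊤) :
    derivedSeries G (2 * n) = ⊥ :=
  stmt15_general G n h
end
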